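/- Let P be a concave lattice path of degree d for h starting at (0,y), with edges v_i = m_i(q_i,p_i) and vertical displacement V = Σᵢ m_i p_i. Let Λ be the closed polygon whose edges are the images, under the clockwise rotation by 90° given by (a,b) ↦ (b,−a), of the edges v_i of P together with the two closing edges (−d,0) and (0,−V). Then the ‖·‖*_Ω-length of Λ, namely the sum over all edges e of Λ of ‖e‖*_Ω, equals d·h(1) + 2y + 2V − 2A(P). -/

import Mathlib

open Set Finset

noncomputable section

/-- A concave lattice path of degree `d` (with slopes between `0` and `κ`): a starting
height `y ∈ ℤ` together with edge vectors `v_i = m_i • (q_i, p_i)`, `i = 0, …, n`, where the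
`m_i` are positive integers, `p_i ≥ 0` and `q_i ≥ 1` are coprime, the slopes `p_i / q_i`
are strictly increasing, the last slope is at most `κ`, and the total horizontal
displacement is `∑ m_i q_i = d`. -/
structure ConcavePath (κ : ℕ) (d : ℕ) where
  y : ℤ
  n : ℕ
  m : Fin (n + 1) → ℕ
  q : Fin (n + 1) → ℕ
  p : Fin (n + 1) → ℕ
  m_pos : ∀ i, 0 < m i
  q_pos : ∀ i, 0 < q i
  coprime : ∀ i, Nat.Coprime (p i) (q i)
  slope_strictMono : ∀ i j : Fin (n + 1), i < j → p i * q j < p j * q i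
  slope_le : p (Fin.last n) ≤ κ * q (Fin.last n)
  degree : ∑ i, m i * q i = d

namespace ConcavePath

variable {κ d : ℕ}

/-- The vertical displacement `V = ∑ m_i p_i` of a concave lattice path. -/
def V (P : ConcavePath κ d) : ℕ := ∑ i, P.m i * P.p i

/-- The action `A(P) = y + ∑ (m_i / 2) (p_i (1 - z_i) + q_i h(z_i))`, computed with respect
to a choice `z` of points with `h'(z_i) = p_i / q_i`. -/
def action (P : ConcavePath κ d) (h : ℝ → ℝ) (z : Fin (P.n + 1) → ℝ) : ℝ :=
  (P.y : ℝ) + ∑ i, (P.m i : ℝ) / 2 * ((P.p i : ℝ) * (1 - z i) + (P.q i : ℝ) * h (z i))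

end ConcavePath

/-- The region `Ω = {(z, w) : -1 ≤ z ≤ 1, h(z) ≤ w ≤ h(1)}`. -/
def Omega (h : ℝ → ℝ) : Set (ℝ × ℝ) :=
  {w : ℝ × ℝ | -1 ≤ w.1 ∧ w.1 ≤ 1 ∧ h w.1 ≤ w.2 ∧ w.2 ≤ h 1}

/-- The dual norm `‖v‖*_Ω = max {v ⬝ w : w ∈ Ω}`. -/
def dualNorm (Ω : Set (ℝ × ℝ)) (v : ℝ × ℝ) : ℝ :=
  sSup ((fun w : ℝ × ℝ => v.1 * w.1 + v.2 * w.2) '' Ω)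


section Aux


/-- Tangent line inequality for a function with monotone derivative on `Icc (-1) 1`. -/
lemma tangent_le_aux {f : ℝ → ℝ} (hf : ContDiff ℝ (⊤ : ℕ∞) f)
    (hmonoD : MonotoneOn (deriv f) (Icc (-1:ℝ) 1))
    {a b : ℝ} (ha : a ∈ Icc (-1:ℝ) 1) (hb : b ∈ Icc (-1:ℝ) 1) :
    f a + deriv f a * (b - a) ≤ f b := by
  have hdiff : ∀ x, DifferentiableAt ℝ f x := fun x => (hf.differentiable (by simp)) x
  rcases lt_trichotomy a b with hab | hab | hab
  · obtain ⟨c, hc, hc'⟩ := exists_deriv_eq_slope f hab (hf.continuous.continuousOn)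
      (fun x _ => (hdiff x).differentiableWithinAt)
    have hcI : c ∈ Icc (-1:ℝ) 1 := ⟨le_trans ha.1 hc.1.le, le_trans hc.2.le hb.2⟩
    have h1 : deriv f a ≤ deriv f c := hmonoD ha hcI hc.1.le
    have h2 : deriv f c * (b - a) = f b - f a := by
      rw [hc', div_mul_cancel₀ _ (by linarith : b - a ≠ 0)]
    nlinarith [mul_le_mul_of_nonneg_right h1 (by linarith : (0:ℝ) ≤ b - a)]
  · simp [hab]
  · obtain ⟨c, hc, hc'⟩ := exists_deriv_eq_slope f hab (hf.continuous.continuousOn)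
      (fun x _ => (hdiff x).differentiableWithinAt)
    have hcI : c ∈ Icc (-1:ℝ) 1 := ⟨le_trans hb.1 hc.1.le, le_trans hc.2.le ha.2⟩
    have h1 : deriv f c ≤ deriv f a := hmonoD hcI ha hc.2.le
    have h2 : deriv f c * (a - b) = f a - f b := by
      rw [hc', div_mul_cancel₀ _ (by linarith : a - b ≠ 0)]
    nlinarith [mul_le_mul_of_nonneg_right h1 (by linarith : (0:ℝ) ≤ a - b)]

end Aux

lemma dualNorm_eq_of_isGreatest {h : ℝ → ℝ} {v w0 : ℝ × ℝ} (hw0 : w0 ∈ Omega h)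
    (hub : ∀ w ∈ Omega h, v.1 * w.1 + v.2 * w.2 ≤ v.1 * w0.1 + v.2 * w0.2) :
    dualNorm (Omega h) v = v.1 * w0.1 + v.2 * w0.2 :=
  IsGreatest.csSup_eq ⟨⟨w0, hw0, rfl⟩, by rintro x ⟨w, hw, rfl⟩; exact hub w hw⟩

/-- The `‖·‖*_Ω`-length of the closed polygon `Λ`, obtained by rotating clockwise by `90°`
(via `(a,b) ↦ (b,-a)`) the edges of `P` together with the closing edges `(-d, 0)` and
`(0, -V)`, equals `d h(1) + 2y + 2V - 2A(P)`. -/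
theorem concavePath_length_eq (h : ℝ → ℝ) (hsm : ContDiff ℝ (⊤ : ℕ∞) h)
    (h1 : h (-1) = 0) (h2 : deriv h (-1) = 0)
    (hmono : ∀ z ∈ Icc (-1:ℝ) 1, 0 ≤ deriv h z)
    (hconv : ∀ z ∈ Icc (-1:ℝ) 1, 0 ≤ deriv (deriv h) z)
    (κ : ℕ) (hκ : 0 < κ) (hκ' : deriv h 1 = (κ : ℝ))
    (d : ℕ) (hd : 0 < d) (P : ConcavePath κ d)
    (z : Fin (P.n + 1) → ℝ)
    (hz : ∀ i, z i ∈ Icc (-1:ℝ) 1)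
    (hz' : ∀ i, deriv h (z i) = (P.p i : ℝ) / (P.q i : ℝ)) :
    (∑ i, dualNorm (Omega h) ((P.m i : ℝ) * (P.p i : ℝ), -((P.m i : ℝ) * (P.q i : ℝ))))
        + dualNorm (Omega h) (0, (d : ℝ)) + dualNorm (Omega h) (-(P.V : ℝ), 0)
      = (d : ℝ) * h 1 + 2 * (P.y : ℝ) + 2 * (P.V : ℝ) - 2 * P.action h z := by
  have hdiffh : Differentiable ℝ h := hsm.differentiable (by simp)
  have hdsm : ContDiff ℝ (⊤:ℕ∞) (deriv h) :=
    (contDiff_infty_iff_deriv.mp (hsm.of_le (by simp))).2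
  have hDmono : MonotoneOn (deriv h) (Icc (-1:ℝ) 1) := by
    apply monotoneOn_of_deriv_nonneg (convex_Icc _ _) hdsm.continuous.continuousOn
      ((hdsm.differentiable (by simp)).differentiableOn)
    intro x hx
    rw [interior_Icc] at hx
    exact hconv x ⟨hx.1.le, hx.2.le⟩
  have hHmono : MonotoneOn h (Icc (-1:ℝ) 1) := by
    apply monotoneOn_of_deriv_nonneg (convex_Icc _ _) hsm.continuous.continuousOn
      (hdiffh.differentiableOn)
    intro x hx
    rw [interior_Icc] at hx
    exact hmono x ⟨hx.1.le, hx.2.le⟩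
  have h1nn : (0:ℝ) ≤ h 1 := by
    have := hHmono (show (-1:ℝ) ∈ Icc (-1:ℝ) 1 by constructor <;> norm_num)
      (show (1:ℝ) ∈ Icc (-1:ℝ) 1 by constructor <;> norm_num) (by norm_num)
    linarith [h1 ▸ this]
  have hle1 : ∀ x ∈ Icc (-1:ℝ) 1, h x ≤ h 1 := fun x hx =>
    hHmono hx (show (1:ℝ) ∈ Icc (-1:ℝ) 1 by constructor <;> norm_num) hx.2
  -- second closing edge
  have hD2 : dualNorm (Omega h) (0, (d : ℝ)) = (d : ℝ) * h 1 := by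
    have := dualNorm_eq_of_isGreatest (h := h) (v := (0, (d:ℝ))) (w0 := (1, h 1))
      ⟨by norm_num, by norm_num, le_refl _, le_refl _⟩
      (fun w hw => by
        have : w.2 ≤ h 1 := hw.2.2.2
        simp only
        nlinarith [Nat.cast_nonneg (α := ℝ) d])
    simpa using this
  -- third closing edge
  have hD3 : dualNorm (Omega h) (-(P.V : ℝ), 0) = (P.V : ℝ) := by
    have := dualNorm_eq_of_isGreatest (h := h) (v := (-(P.V:ℝ), 0)) (w0 := (-1, 0))
      ⟨le_refl _, by norm_num, le_of_eq h1, h1nn⟩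
      (fun w hw => by
        have h1' : -1 ≤ w.1 := hw.1
        simp only
        nlinarith [Nat.cast_nonneg (α := ℝ) P.V])
    simpa using this
  -- the path edges
  have hkey : ∀ i, dualNorm (Omega h)
      ((P.m i : ℝ) * (P.p i : ℝ), -((P.m i : ℝ) * (P.q i : ℝ)))
      = (P.m i : ℝ) * ((P.p i : ℝ) * z i - (P.q i : ℝ) * h (z i)) := by
    intro i
    have hq : (0:ℝ) < (P.q i : ℝ) := by exact_mod_cast P.q_pos i
    have hm : (0:ℝ) ≤ (P.m i : ℝ) := Nat.cast_nonneg _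
    have hp : (0:ℝ) ≤ (P.p i : ℝ) := Nat.cast_nonneg _
    have hderiv : deriv h (z i) * (P.q i : ℝ) = (P.p i : ℝ) := by
      rw [hz' i, div_mul_cancel₀ _ (ne_of_gt hq)]
    have := dualNorm_eq_of_isGreatest (h := h)
      (v := ((P.m i : ℝ) * (P.p i : ℝ), -((P.m i : ℝ) * (P.q i : ℝ))))
      (w0 := (z i, h (z i)))
      ⟨(hz i).1, (hz i).2, le_refl _, hle1 _ (hz i)⟩
      (fun w hw => by
        have htan : h (z i) + deriv h (z i) * (w.1 - z i) ≤ h w.1 :=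
          tangent_le_aux hsm hDmono (hz i) ⟨hw.1, hw.2.1⟩
        have hwb : h w.1 ≤ w.2 := hw.2.2.1
        simp only
        have e1 := mul_le_mul_of_nonneg_left htan (mul_nonneg hm hq.le)
        have e2 := mul_le_mul_of_nonneg_left hwb (mul_nonneg hm hq.le)
        have e3 : (P.m i : ℝ) * (deriv h (z i) * (P.q i : ℝ)) * (w.1 - z i)
            = (P.m i : ℝ) * (P.p i : ℝ) * (w.1 - z i) := by rw [hderiv]
        nlinarith [e1, e2, e3])
    rw [this]; ring
  rw [hD2, hD3]
  simp only [hkey]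
  have hVcast : (P.V : ℝ) = ∑ i, (P.m i : ℝ) * (P.p i : ℝ) := by
    rw [ConcavePath.V]; push_cast; rfl
  rw [ConcavePath.action, hVcast]
  have hterm : (∑ i, (P.m i : ℝ) * ((P.p i : ℝ) * z i - (P.q i : ℝ) * h (z i)))
      = ∑ i, ((P.m i : ℝ) * (P.p i : ℝ)
        - 2 * ((P.m i : ℝ) / 2 * ((P.p i : ℝ) * (1 - z i) + (P.q i : ℝ) * h (z i)))) :=
    Finset.sum_congr rfl (fun i _ => by ring)
  rw [hterm, Finset.sum_sub_distrib, ← Finset.mul_sum]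
  ring


end
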